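/- arXiv:1807.06938 — 8 statements merged into one kernel-verified Lean document; each statement's English description precedes it below -/
import Mathlib

section
/- For any subset A of ℝ, the Hattori space (ℝ, τ_A) is a Baire space. -/
open Set Topology

def hattori (A : Set ℝ) : TopologicalSpace ℝ where
  IsOpen U := ∀ x ∈ U, ∃ ε > (0 : ℝ),
    (x ∈ A → Ioo (x - ε) (x + ε) ⊆ U) ∧ (x ∉ A → Ico x (x + ε) ⊆ U)
  isOpen_univ := fun x _ => ⟨1, one_pos, fun _ => subset_univ _, fun _ => subset_univ _⟩
  isOpen_inter := by
    intro U V hU hV x hx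
    obtain ⟨ε₁, hε₁, h₁, h₁'⟩ := hU x hx.1
    obtain ⟨ε₂, hε₂, h₂, h₂'⟩ := hV x hx.2
    have l1 := min_le_left ε₁ ε₂
    have l2 := min_le_right ε₁ ε₂
    refine ⟨min ε₁ ε₂, lt_min hε₁ hε₂, fun hA => ?_, fun hA => ?_⟩
    · intro y hy
      exact ⟨h₁ hA ⟨by linarith [hy.1], by linarith [hy.2]⟩,
             h₂ hA ⟨by linarith [hy.1], by linarith [hy.2]⟩⟩
    · intro y hy
      exact ⟨h₁' hA ⟨hy.1, by linarith [hy.2]⟩, h₂' hA ⟨hy.1, by linarith [hy.2]⟩⟩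
  isOpen_sUnion := by
    intro S hS x hx
    obtain ⟨U, hU, hxU⟩ := hx
    obtain ⟨ε, hε, h, h'⟩ := hS U hU x hxU
    exact ⟨ε, hε, fun hA => (h hA).trans (subset_sUnion_of_mem hU),
      fun hA => (h' hA).trans (subset_sUnion_of_mem hU)⟩

def sorgenfrey : TopologicalSpace ℝ :=
  TopologicalSpace.generateFrom {S | ∃ a b : ℝ, S = Ico a b}

/-- Euclidean open sets are Hattori open. -/
lemma hattori_isOpen_of_isOpen (A : Set ℝ) {U : Set ℝ} (h : IsOpen U) :
    IsOpen[hattori A] U := by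
  intro x hx
  obtain ⟨ε, hε, hball⟩ := Metric.isOpen_iff.1 h x hx
  rw [Real.ball_eq_Ioo] at hball
  refine ⟨ε, hε, fun _ => hball, fun _ => fun y hy => hball ⟨by linarith [hy.1, hε], hy.2⟩⟩

/-- Nonempty Hattori open sets contain a nonempty Euclidean open interval. -/
lemma hattori_contains_Ioo (A : Set ℝ) {U : Set ℝ} (h : IsOpen[hattori A] U)
    (hne : U.Nonempty) : ∃ a b : ℝ, a < b ∧ Ioo a b ⊆ U := by
  obtain ⟨x, hx⟩ := hne
  obtain ⟨ε, hε, h1, h2⟩ := h x hx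
  by_cases hA : x ∈ A
  · exact ⟨x - ε, x + ε, by linarith, h1 hA⟩
  · exact ⟨x, x + ε, by linarith, fun y hy => h2 hA ⟨le_of_lt hy.1, hy.2⟩⟩

/-- Euclidean-dense sets are Hattori dense. -/
lemma dense_iff' {X : Type*} (t : TopologicalSpace X) (s : Set X) :
    @Dense X t s ↔ ∀ U, IsOpen[t] U → U.Nonempty → (U ∩ s).Nonempty := by
  letI := t; exact dense_iff_inter_open

lemma hattori_dense_of_dense (A : Set ℝ) {s : Set ℝ} (h : Dense s) :
    @Dense ℝ (hattori A) s := by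
  rw [dense_iff' (hattori A)]
  intro U hU hne
  obtain ⟨a, b, hab, hsub⟩ := hattori_contains_Ioo A hU hne
  obtain ⟨y, hy, hys⟩ := (dense_iff_inter_open.1 h) (Ioo a b) isOpen_Ioo ⟨(a+b)/2, by constructor <;> [linarith; linarith]⟩
  exact ⟨y, hsub hy, hys⟩

theorem stmt3 (A : Set ℝ) : @BaireSpace ℝ (hattori A) := by
  refine @BaireSpace.mk ℝ (hattori A) ?_
  intro f hopen hdense
  -- Euclidean interiors of the f n are Euclidean dense open
  have hdi : ∀ n, Dense (interior (f n)) := by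
    intro n
    rw [dense_iff_inter_open]
    intro U hU hne
    have hU' : IsOpen[hattori A] (U ∩ f n) :=
      (hattori A).isOpen_inter _ _ (hattori_isOpen_of_isOpen A hU) (hopen n)
    have hne' : (U ∩ f n).Nonempty := by
      exact (dense_iff' (hattori A) (f n)).1 (hdense n) U
        (hattori_isOpen_of_isOpen A hU) hne
    obtain ⟨a, b, hab, hsub⟩ := hattori_contains_Ioo A hU' hne'
    refine ⟨(a+b)/2, ?_, ?_⟩
    · exact (hsub ⟨by linarith, by linarith⟩).1
    · apply mem_interior.2 ⟨Ioo a b, fun y hy => (hsub hy).2, isOpen_Ioo, ⟨by linarith, by linarith⟩⟩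
  have hbaire : Dense (⋂ n, interior (f n)) :=
    dense_iInter_of_isOpen (fun n => isOpen_interior) hdi
  have hsub : (⋂ n, interior (f n)) ⊆ ⋂ n, f n :=
    iInter_mono fun n => interior_subset
  rw [dense_iff' (hattori A)]
  intro U hU hne
  obtain ⟨y, hyU, hys⟩ := (dense_iff' (hattori A) _).1 (hattori_dense_of_dense A hbaire) U hU hne
  exact ⟨y, hyU, hsub hys⟩
end

section
/- For any subset A of ℝ, the Hattori space (ℝ, τ_A) is connected if and only if A = ℝ. -/
open Set

/-! If `x ∉ A`, then `[x, ∞)` is clopen in `τ_A`: it is open because `x` has the Sorgenfrey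
neighbourhoods `[x, x + ε)` and every other point lies in `(x, ∞)`, and it is closed because `τ_A`
is finer than the Euclidean topology, in which `(-∞, x)` is open. -/

open Topology

lemma hattori_le_euclidean (A : Set ℝ) : hattori A ≤ (inferInstance : TopologicalSpace ℝ) := by
  intro U hU x hx
  obtain ⟨ε, hε, hball⟩ := Metric.isOpen_iff.1 hU x hx
  rw [Real.ball_eq_Ioo] at hball
  exact ⟨ε, hε, fun _ => hball, fun _ => (Ico_subset_Ioo_left (by linarith)).trans hball⟩

lemma hattori_univ : hattori univ = (inferInstance : TopologicalSpace ℝ) := by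
  refine le_antisymm (hattori_le_euclidean univ) fun U hU => Metric.isOpen_iff.2 fun x hx => ?_
  obtain ⟨ε, hε, hball, -⟩ := hU x hx
  exact ⟨ε, hε, by simpa [Real.ball_eq_Ioo] using hball⟩

lemma hattori_isOpen_Ici {A : Set ℝ} {x : ℝ} (hx : x ∉ A) : IsOpen[hattori A] (Ici x) := by
  intro y hy
  by_cases hyA : y ∈ A
  · have hxy : x < y := lt_of_le_of_ne hy (by rintro rfl; exact hx hyA)
    refine ⟨y - x, sub_pos.2 hxy, fun _ z hz => ?_, fun h => absurd hyA h⟩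
    exact (by linarith [hz.1] : x < z).le
  · exact ⟨1, one_pos, fun h => absurd h hyA, fun _ z hz => le_trans hy hz.1⟩

lemma hattori_isClopen_Ici {A : Set ℝ} {x : ℝ} (hx : x ∉ A) : @IsClopen ℝ (hattori A) (Ici x) := by
  have hIio : IsOpen (Iio x) := isOpen_Iio
  let _ := hattori A
  refine ⟨isOpen_compl_iff.1 ?_, hattori_isOpen_Ici hx⟩
  rw [compl_Ici]
  exact hattori_le_euclidean A _ hIio

theorem stmt5 (A : Set ℝ) : @ConnectedSpace ℝ (hattori A) ↔ A = Set.univ := by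
  constructor
  · intro hconn
    by_contra hA
    obtain ⟨x, hx⟩ := (ne_univ_iff_exists_notMem A).1 hA
    rcases (@isClopen_iff ℝ (hattori A) _ _).1 (hattori_isClopen_Ici hx) with h | h
    · exact (nonempty_Ici (a := x)).ne_empty h
    · exact notMem_Ici.2 (sub_one_lt x) (h.symm ▸ mem_univ (x - 1))
  · rintro rfl
    rw [hattori_univ]
    infer_instance
end

section
/- For any subset A of ℝ, the Hattori space (ℝ, τ_A) is zero-dimensional (has a base of clopen sets) if and only if ℝ\A is dense in the Euclidean topology on ℝ. -/
open Set

lemma hattori_isOpen {A U : Set ℝ} :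
    @IsOpen ℝ (hattori A) U ↔ ∀ x ∈ U, ∃ ε > (0 : ℝ),
      (x ∈ A → Ioo (x - ε) (x + ε) ⊆ U) ∧ (x ∉ A → Ico x (x + ε) ⊆ U) := Iff.rfl

lemma hattori_isOpen_Ico {A : Set ℝ} {a b : ℝ} (ha : a ∉ A) :
    @IsOpen ℝ (hattori A) (Ico a b) := by
  rw [hattori_isOpen]
  intro x hx
  by_cases hxA : x ∈ A
  · have hax : a < x := lt_of_le_of_ne hx.1 (by rintro rfl; exact ha hxA)
    refine ⟨min (x - a) (b - x), lt_min (by linarith) (by linarith [hx.2]),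
      fun _ y hy => ?_, fun h => absurd hxA h⟩
    have l1 := min_le_left (x - a) (b - x)
    have l2 := min_le_right (x - a) (b - x)
    exact ⟨by linarith [hy.1], by linarith [hy.2]⟩
  · exact ⟨b - x, by linarith [hx.2], fun h => absurd h hxA,
      fun _ y hy => ⟨le_trans hx.1 hy.1, by linarith [hy.2]⟩⟩

lemma hattori_isClosed_Ico {A : Set ℝ} {a b : ℝ} (hb : b ∉ A) :
    @IsClosed ℝ (hattori A) (Ico a b) := by
  letI := hattori A
  refine ⟨?_⟩
  rw [hattori_isOpen]
  intro x hx
  simp only [mem_compl_iff, mem_Ico, not_and, not_lt] at hx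
  by_cases hxa : x < a
  · refine ⟨a - x, by linarith, fun _ y hy => ?_, fun _ y hy => ?_⟩ <;>
    · simp only [mem_compl_iff, mem_Ico, not_and, not_lt]
      intro hay; linarith [hy.1, hy.2]
  · push_neg at hxa
    have hbx : b ≤ x := hx hxa
    by_cases hxA : x ∈ A
    · have hbx' : b < x := lt_of_le_of_ne hbx (by rintro rfl; exact hb hxA)
      refine ⟨x - b, by linarith, fun _ y hy => ?_, fun h => absurd hxA h⟩
      simp only [mem_compl_iff, mem_Ico, not_and, not_lt]
      intro _; linarith [hy.1]
    · refine ⟨1, one_pos, fun h => absurd h hxA, fun _ y hy => ?_⟩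
      simp only [mem_compl_iff, mem_Ico, not_and, not_lt]
      intro _; linarith [hy.1]

theorem stmt6 (A : Set ℝ) :
    (∃ B : Set (Set ℝ), (∀ s ∈ B, @IsClopen ℝ (hattori A) s) ∧
        @TopologicalSpace.IsTopologicalBasis ℝ (hattori A) B) ↔
      Dense Aᶜ := by
  constructor
  · rintro ⟨B, hclo, hbasis⟩
    by_contra hnd
    -- Not dense: some open interval is inside A
    rw [dense_iff_inter_open] at hnd
    push_neg at hnd
    obtain ⟨U, hU, hUne, hUA⟩ := hnd
    obtain ⟨y, hy⟩ := hUne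
    obtain ⟨ε, hε, hball⟩ := Metric.isOpen_iff.1 hU y hy
    have hIooA : Ioo (y - ε) (y + ε) ⊆ A := by
      intro z hz
      by_contra hzA
      exact (Set.not_nonempty_iff_eq_empty.2 hUA) ⟨z, hball (by
        rw [Real.ball_eq_Ioo]; exact hz), hzA⟩
    set c := y - ε
    set d := y + ε
    have hcd : c < d := by simp only [c, d]; linarith
    -- Ioo c d is hattori-open
    have hIoo_open : @IsOpen ℝ (hattori A) (Ioo c d) := by
      rw [hattori_isOpen]
      intro x hx
      refine ⟨min (x - c) (d - x), lt_min (by linarith [hx.1]) (by linarith [hx.2]),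
        fun _ z hz => ?_, fun _ z hz => ?_⟩ <;>
      · have l1 := min_le_left (x - c) (d - x)
        have l2 := min_le_right (x - c) (d - x)
        exact ⟨by linarith [hz.1, hx.1], by linarith [hz.2, hx.2]⟩
    have hx : y ∈ Ioo c d := by simp only [c, d]; constructor <;> linarith
    obtain ⟨s, hsB, hys, hsub⟩ := @TopologicalSpace.IsTopologicalBasis.exists_subset_of_mem_open ℝ (hattori A) B hbasis y (Ioo c d) hx hIoo_open
    -- s is a clopen subset of Ioo c d containing y; derive a contradiction
    have hsopen := (hclo s hsB).2
    have hscopen : @IsOpen ℝ (hattori A) sᶜ := (hclo s hsB).1.isOpen_compl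
    set T := sᶜ ∩ Iic y with hT
    have hcT : c ∈ T := ⟨fun h => (lt_irrefl c (hsub h).1), le_of_lt hx.1⟩
    have hbdd : BddAbove T := ⟨y, fun z hz => hz.2⟩
    set v := sSup T with hv
    have hvy : v ≤ y := csSup_le ⟨c, hcT⟩ (fun z hz => hz.2)
    have hkey : ∀ z, v < z → z ≤ y → z ∈ s := by
      intro z hvz hzy
      by_contra hzs
      exact absurd (le_csSup hbdd ⟨hzs, hzy⟩) (not_le.2 hvz)
    have hcv : c ≤ v := le_csSup hbdd hcT
    by_cases hvs : v ∈ s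
    · -- v ∈ s ⊆ Ioo c d ⊆ A, s is open, get points of T inside s
      have hvA : v ∈ A := hIooA (hsub hvs)
      obtain ⟨δ, hδ, h1, _⟩ := hattori_isOpen.1 hsopen v hvs
      obtain ⟨z, hzT, hzv⟩ := exists_lt_of_lt_csSup ⟨c, hcT⟩ (show v - δ < v by linarith)
      have hzle : z ≤ v := le_csSup hbdd hzT
      exact hzT.1 (h1 hvA ⟨hzv, by linarith⟩)
    · -- v ∉ s: sᶜ is open at v, but points just right of v are in s
      have hvy' : v < y := lt_of_le_of_ne hvy (fun h => hvs (by rw [h]; exact hys))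
      obtain ⟨δ, hδ, h1, h2⟩ := hattori_isOpen.1 hscopen v hvs
      have hvz : v < min y (v + δ / 2) := lt_min hvy' (by linarith)
      have hzs : min y (v + δ / 2) ∈ s := hkey _ hvz (min_le_left _ _)
      have hzd : min y (v + δ / 2) < v + δ :=
        lt_of_le_of_lt (min_le_right _ _) (by linarith)
      by_cases hvA : v ∈ A
      · exact (h1 hvA ⟨by linarith, hzd⟩) hzs
      · exact (h2 hvA ⟨le_of_lt hvz, hzd⟩) hzs
  · intro hd
    refine ⟨{s | ∃ a b : ℝ, a ∉ A ∧ b ∉ A ∧ s = Ico a b}, ?_, ?_⟩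
    · rintro s ⟨a, b, ha, hb, rfl⟩
      exact ⟨hattori_isClosed_Ico hb, hattori_isOpen_Ico ha⟩
    · refine @TopologicalSpace.isTopologicalBasis_of_isOpen_of_nhds ℝ (hattori A) _ ?_ ?_
      · rintro s ⟨a, b, ha, _, rfl⟩
        exact hattori_isOpen_Ico ha
      · intro x U hxU hU
        obtain ⟨ε, hε, h1, h2⟩ := hattori_isOpen.1 hU x hxU
        by_cases hxA : x ∈ A
        · obtain ⟨a, haA, haI⟩ := hd.exists_mem_open isOpen_Ioo
            (nonempty_Ioo.2 (show x - ε < x by linarith))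
          obtain ⟨b, hbA, hbI⟩ := hd.exists_mem_open isOpen_Ioo
            (nonempty_Ioo.2 (show x < x + ε by linarith))
          refine ⟨Ico a b, ⟨a, b, haA, hbA, rfl⟩, ⟨le_of_lt haI.2, hbI.1⟩,
            fun z hz => h1 hxA ⟨lt_of_lt_of_le haI.1 hz.1, lt_trans hz.2 hbI.2⟩⟩
        · obtain ⟨b, hbA, hbI⟩ := hd.exists_mem_open isOpen_Ioo
            (nonempty_Ioo.2 (show x < x + ε by linarith))
          refine ⟨Ico x b, ⟨x, b, hxA, hbA, rfl⟩, ⟨le_refl x, hbI.1⟩,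
            fun z hz => h2 hxA ⟨hz.1, lt_trans hz.2 hbI.2⟩⟩
end

section
/- If ℝ\A is dense in the Euclidean topology, then for every x ∉ A and every strictly decreasing sequence (x_n) in ℝ\A converging to x, the sets [x, x_n) are clopen in (ℝ, τ_A) and form a neighborhood base at x. -/
open Set

/-! The topology `τ_A` is finer than the Euclidean one, and at a point outside `A` its
neighbourhood filter is the Euclidean right neighbourhood filter `𝓝[≥] x`. Hence `[a, b)` is open
as soon as `a ∉ A`, and closed as soon as `b ∉ A`, its complement being `(-∞, a) ∪ [b, ∞)`.
Any sequence decreasing to `x` cuts out a basis of `𝓝[≥] x`. -/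

open Filter Topology

theorem StrictAnti.lt_of_tendsto {α β : Type*} [TopologicalSpace α] [Preorder α]
    [OrderClosedTopology α] [PartialOrder β] [IsDirectedOrder β] [NoMaxOrder β] {f : β → α} {a : α}
    (hf : StrictAnti f) (ha : Tendsto f atTop (𝓝 a)) (b : β) : a < f b := by
  obtain ⟨c, hbc⟩ := exists_gt b
  exact (hf.antitone.le_of_tendsto ha c).trans_lt (hf hbc)

theorem nhdsGE_hasBasis_Ico_of_tendsto {α ι : Type*} [TopologicalSpace α] [LinearOrder α]
    [OrderTopology α] [NoMaxOrder α] {l : Filter ι} [l.NeBot] {a : α} {u : ι → α}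
    (hu : ∀ i, a < u i) (hlim : Tendsto u l (𝓝 a)) :
    (𝓝[≥] a).HasBasis (fun _ => True) (fun i => Ico a (u i)) := by
  refine (nhdsGE_basis a).to_hasBasis' (fun b hab => ?_) fun i _ =>
    (nhdsGE_basis a).mem_of_mem (hu i)
  obtain ⟨i, hi⟩ := (hlim.eventually (eventually_lt_nhds hab)).exists
  exact ⟨i, trivial, Ico_subset_Ico_right hi.le⟩

section Hattori

variable {A : Set ℝ}

theorem IsOpen.isOpen_hattori {U : Set ℝ} (hU : IsOpen U) : IsOpen[hattori A] U := by
  intro x hx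
  obtain ⟨ε, hε, hball⟩ := Metric.isOpen_iff.1 hU x hx
  rw [Real.ball_eq_Ioo] at hball
  exact ⟨ε, hε, fun _ => hball,
    fun _ => (Ico_subset_Ioo_left (by linarith)).trans hball⟩

theorem isOpen_hattori_Ici {a : ℝ} (ha : a ∉ A) : IsOpen[hattori A] (Ici a) := by
  intro y (hy : a ≤ y)
  rcases hy.eq_or_lt with rfl | hay
  · exact ⟨1, one_pos, fun h => absurd h ha, fun _ => Ico_subset_Ici_self⟩
  · exact ⟨y - a, sub_pos.2 hay, fun _ z hz => show a ≤ z by linarith [hz.1],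
      fun _ z hz => hy.trans hz.1⟩

theorem isOpen_hattori_Ico {a : ℝ} (b : ℝ) (ha : a ∉ A) : IsOpen[hattori A] (Ico a b) := by
  rw [← Ici_inter_Iio]
  exact @IsOpen.inter ℝ (hattori A) _ _ (isOpen_hattori_Ici ha) isOpen_Iio.isOpen_hattori

theorem isClopen_hattori_Ico {a b : ℝ} (ha : a ∉ A) (hb : b ∉ A) :
    @IsClopen ℝ (hattori A) (Ico a b) := by
  refine ⟨?_, isOpen_hattori_Ico b ha⟩
  have hcompl : (Ico a b)ᶜ = Iio a ∪ Ici b := by ext; simp [imp_iff_not_or]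
  rw [← @isOpen_compl_iff ℝ _ (hattori A), hcompl]
  exact @IsOpen.union ℝ _ _ (hattori A) isOpen_Iio.isOpen_hattori (isOpen_hattori_Ici hb)

theorem nhds_hattori_of_notMem {x : ℝ} (hx : x ∉ A) : @nhds ℝ (hattori A) x = 𝓝[≥] x := by
  refine (@nhds_basis_opens ℝ (hattori A) x).ext (nhdsGE_basis x) (fun U ⟨hxU, hU⟩ => ?_)
    fun b hxb => ⟨Ico x b, ⟨⟨le_rfl, hxb⟩, isOpen_hattori_Ico b hx⟩, subset_rfl⟩
  obtain ⟨ε, hε, -, hIco⟩ := hU x hxU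
  exact ⟨x + ε, by linarith, hIco hx⟩

end Hattori

theorem stmt7_general (A : Set ℝ) (x₀ : ℝ) (hx₀ : x₀ ∉ A)
    (x : ℕ → ℝ) (hanti : StrictAnti x) (hmem : ∀ n, x n ∉ A)
    (hlim : Filter.Tendsto x Filter.atTop (nhds x₀)) :
    (∀ n, @IsClopen ℝ (hattori A) (Set.Ico x₀ (x n))) ∧
      (@nhds ℝ (hattori A) x₀).HasBasis (fun _ : ℕ => True)
        (fun n => Set.Ico x₀ (x n)) := by
  refine ⟨fun n => isClopen_hattori_Ico hx₀ (hmem n), ?_⟩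
  rw [nhds_hattori_of_notMem hx₀]
  exact nhdsGE_hasBasis_Ico_of_tendsto (hanti.lt_of_tendsto hlim) hlim

theorem stmt7 (A : Set ℝ) (hd : Dense Aᶜ) (x₀ : ℝ) (hx₀ : x₀ ∉ A)
    (x : ℕ → ℝ) (hanti : StrictAnti x) (hmem : ∀ n, x n ∉ A)
    (hlim : Filter.Tendsto x Filter.atTop (nhds x₀)) :
    (∀ n, @IsClopen ℝ (hattori A) (Set.Ico x₀ (x n))) ∧
      (@nhds ℝ (hattori A) x₀).HasBasis (fun _ : ℕ => True)
        (fun n => Set.Ico x₀ (x n)) :=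
  stmt7_general A x₀ hx₀ x hanti hmem hlim
end

section
/- Every uncountable subspace of the Sorgenfrey line has network weight at least its cardinality; in particular, for any subset B of the Sorgenfrey line, nw(B) ≥ |B|. -/
open Set

theorem stmt8 (B : Set ℝ) (P : Set (Set B))
    (hP : ∀ (x : B) (U : Set B), x ∈ U →
      @IsOpen B (TopologicalSpace.induced ((↑) : B → ℝ) sorgenfrey) U →
      ∃ p ∈ P, x ∈ p ∧ p ⊆ U) :
    Cardinal.mk B ≤ Cardinal.mk P := by
  classical
  have key : ∀ x : B, ∃ p : P, x ∈ (p : Set B) ∧ ∀ y ∈ (p : Set B), (x : ℝ) ≤ (y : ℝ) := by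
    intro x
    have hopen : @IsOpen B (TopologicalSpace.induced ((↑) : B → ℝ) sorgenfrey)
        (((↑) : B → ℝ) ⁻¹' Ico (x : ℝ) ((x : ℝ) + 1)) :=
      ⟨Ico (x : ℝ) ((x : ℝ) + 1),
        TopologicalSpace.GenerateOpen.basic _ ⟨_, _, rfl⟩, rfl⟩
    obtain ⟨p, hpP, hxp, hsub⟩ := hP x (((↑) : B → ℝ) ⁻¹' Ico (x : ℝ) ((x : ℝ) + 1)) ⟨le_refl _, by linarith⟩ hopen
    exact ⟨⟨p, hpP⟩, hxp, fun y hy => (hsub hy).1⟩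
  choose f hf1 hf2 using key
  have hinj : Function.Injective f := by
    intro x y hxy
    have h1 : (x : ℝ) ≤ (y : ℝ) := hf2 x y (hxy ▸ hf1 y)
    have h2 : (y : ℝ) ≤ (x : ℝ) := hf2 y x (hxy ▸ hf1 x)
    exact Subtype.ext (le_antisymm h1 h2)
  exact Cardinal.mk_le_of_injective hinj
end

section
/- A subspace X of the Sorgenfrey line is metrizable if and only if X is countable. -/
/-!
Every subspace `X` of the Sorgenfrey line has the neighbourhood bases `X ∩ [x, b)`, which are
clopen, so `X` is regular; it is Hausdorff (finer than the Euclidean subspace) and first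
countable. When `X` is countable it is therefore second countable, and Urysohn's metrization
theorem applies.

Conversely, every subspace `X` is separable: a countable Euclidean-dense subset of `X`, together
with the countably many points of `X` isolated from the right, meets every `X ∩ [x, b)`. A
separable metrizable space is second countable, and a second-countable `X` is countable because
each `x ∈ X` is the least element of some basic open set inside `X ∩ [x, ∞)`.
-/

open Set

open Filter Topology TopologicalSpace

theorem nhds_sorgenfrey (x : ℝ) : @nhds ℝ sorgenfrey x = 𝓝[≥] x := by
  rw [sorgenfrey, nhds_generateFrom]
  refine le_antisymm ((nhdsGE_basis_Ico x).ge_iff.2 fun b hb => ?_) (le_iInf₂ ?_)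
  · exact mem_iInf_of_mem (Ico x b) <| mem_iInf_of_mem ⟨⟨le_rfl, hb⟩, x, b, rfl⟩ <|
      mem_principal_self _
  · rintro _ ⟨hx, a, b, rfl⟩
    exact le_principal_iff.2 <| mem_of_superset (Ico_mem_nhdsGE hx.2) (Ico_subset_Ico_left hx.1)

theorem sorgenfrey_le : sorgenfrey ≤ (inferInstance : TopologicalSpace ℝ) :=
  (le_iff_nhds _ _).2 fun x => (nhds_sorgenfrey x).trans_le nhdsWithin_le_nhds

theorem firstCountableTopology_sorgenfrey : @FirstCountableTopology ℝ sorgenfrey :=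
  @FirstCountableTopology.mk ℝ sorgenfrey fun x => (nhds_sorgenfrey x).symm ▸ inferInstance

theorem isOpen_sorgenfrey_Ici (a : ℝ) : IsOpen[sorgenfrey] (Ici a) :=
  (@isOpen_iff_mem_nhds ℝ sorgenfrey _).2 fun x hx => by
    rw [nhds_sorgenfrey]
    exact mem_of_superset self_mem_nhdsWithin (Ici_subset_Ici.2 hx)

theorem isClosed_sorgenfrey_Ico (a b : ℝ) : IsClosed[sorgenfrey] (Ico a b) := by
  rw [← Ici_inter_Iio, ← compl_Ici]
  exact @IsClosed.inter ℝ _ _ sorgenfrey ((isClosed_Ici : IsClosed (Ici a)).mono sorgenfrey_le)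
    (@IsOpen.isClosed_compl ℝ sorgenfrey _ (isOpen_sorgenfrey_Ici b))

section Subspace

variable (X : Set ℝ)

theorem nhds_basis_Ico_sorgenfrey_subspace (x : X) :
    (@nhds X (.induced (↑) sorgenfrey) x).HasBasis ((x : ℝ) < ·)
      (fun b => (↑) ⁻¹' Ico (x : ℝ) b) := by
  have h := (nhdsGE_basis_Ico (x : ℝ)).comap ((↑) : X → ℝ)
  rwa [← nhds_sorgenfrey, ← @nhds_induced ℝ X sorgenfrey] at h

theorem regularSpace_sorgenfrey_subspace : @RegularSpace X (.induced (↑) sorgenfrey) :=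
  letI := TopologicalSpace.induced ((↑) : X → ℝ) sorgenfrey
  .of_hasBasis (nhds_basis_Ico_sorgenfrey_subspace X) fun _ _ _ =>
    (@isClosed_induced_iff _ _ sorgenfrey _ _).2 ⟨_, isClosed_sorgenfrey_Ico _ _, rfl⟩

theorem t2Space_sorgenfrey_subspace : @T2Space X (.induced (↑) sorgenfrey) :=
  t2Space_antitone (induced_mono sorgenfrey_le) inferInstance

theorem firstCountableTopology_sorgenfrey_subspace :
    @FirstCountableTopology X (.induced (↑) sorgenfrey) :=
  @firstCountableTopology_induced X ℝ sorgenfrey firstCountableTopology_sorgenfrey _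

theorem separableSpace_sorgenfrey_subspace : @SeparableSpace X (.induced (↑) sorgenfrey) := by
  obtain ⟨D, hDc, hD⟩ := exists_countable_dense X
  have hD_meets : ∀ a b : ℝ, (∃ y ∈ X, a < y ∧ y < b) → ∃ d ∈ D, (d : ℝ) ∈ Ioo a b := by
    rintro a b ⟨y, hyX, hay, hyb⟩
    obtain ⟨d, hd, hdD⟩ := hD.inter_open_nonempty _
      (isOpen_Ioo.preimage continuous_subtype_val) ⟨⟨y, hyX⟩, hay, hyb⟩
    exact ⟨d, hdD, hd⟩
  set R : Set X := (↑) ⁻¹' {x ∈ X | ∃ z, id x < z ∧ ∀ y ∈ X, x < y → z ≤ id y}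
  have hR : R.Countable :=
    (countable_image_lt_image_Ioi_within X id).preimage Subtype.val_injective
  let := TopologicalSpace.induced ((↑) : X → ℝ) sorgenfrey
  refine ⟨D ∪ R, hDc.union hR, fun x => ?_⟩
  rw [mem_closure_iff_nhds_basis (nhds_basis_Ico_sorgenfrey_subspace X x)]
  intro b hxb
  by_cases hx : ∃ y ∈ X, (x : ℝ) < y ∧ y < b
  · obtain ⟨d, hdD, hd⟩ := hD_meets _ _ hx
    exact ⟨d, Or.inl hdD, Ioo_subset_Ico_self hd⟩
  · push Not at hx
    exact ⟨x, Or.inr ⟨x.2, b, hxb, hx⟩, le_rfl, hxb⟩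

theorem countable_of_secondCountableTopology_sorgenfrey_subspace
    [@SecondCountableTopology X (.induced (↑) sorgenfrey)] : X.Countable := by
  let := TopologicalSpace.induced ((↑) : X → ℝ) sorgenfrey
  obtain ⟨B, hBc, -, hB⟩ := exists_countable_basis X
  have : ∀ x : X, ∃ U ∈ B, x ∈ U ∧ U ⊆ (↑) ⁻¹' Ici (x : ℝ) := fun x =>
    hB.exists_subset_of_mem_open (mem_Ici.2 le_rfl)
      (@isOpen_induced X ℝ sorgenfrey _ _ (isOpen_sorgenfrey_Ici _))
  choose U hUB hxU hU using this
  have : Countable B := hBc.to_subtype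
  have hinj : Function.Injective fun x => (⟨U x, hUB x⟩ : B) := fun x y hxy => by
    have hxy : U x = U y := congrArg Subtype.val hxy
    exact Subtype.ext <| le_antisymm (hU x (hxy ▸ hxU y)) (hU y (hxy ▸ hxU x))
  exact countable_coe_iff.mp hinj.countable

end Subspace

theorem stmt9 (X : Set ℝ) :
    @TopologicalSpace.MetrizableSpace X
        (TopologicalSpace.induced ((↑) : X → ℝ) sorgenfrey) ↔
      X.Countable := by
  let := TopologicalSpace.induced ((↑) : X → ℝ) sorgenfrey
  have := regularSpace_sorgenfrey_subspace X
  constructor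
  · intro _
    have := separableSpace_sorgenfrey_subspace X
    let := pseudoMetrizableSpaceUniformity X
    have := pseudoMetrizableSpaceUniformity_countably_generated X
    have := UniformSpace.secondCountable_of_separable X
    exact countable_of_secondCountableTopology_sorgenfrey_subspace X
  · intro hX
    have := hX.to_subtype
    have := firstCountableTopology_sorgenfrey_subspace X
    have := t2Space_sorgenfrey_subspace X
    exact metrizableSpace_of_t3_secondCountable X
end

section
/- For any subset A of ℝ, if the closure of ℝ\A in (ℝ, τ_A) is countable, then the Hattori space (ℝ, τ_A) is σ-compact. -/
open Set

/-! The complement `U` of the `τ_A`-closure of `ℝ \ A` is `τ_A`-open and contained in `A`. At a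
point of `A` every `τ_A`-neighbourhood is a Euclidean one, so `U` is Euclidean-open, hence
Euclidean σ-compact, and the identity is continuous on `U` from the Euclidean topology to `τ_A`.
Thus `U` is `τ_A`-σ-compact, and `ℝ` is the union of `U` and the countable closure. -/

open Filter Topology

section SigmaCompact

variable {X : Type*} [TopologicalSpace X]

lemma Set.Countable.isSigmaCompact {s : Set X} (hs : s.Countable) : IsSigmaCompact s := by
  simpa using isSigmaCompact_biUnion hs fun x _ => (isCompact_singleton (x := x)).isSigmaCompact

lemma IsSigmaCompact.union {s t : Set X} (hs : IsSigmaCompact s) (ht : IsSigmaCompact t) :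
    IsSigmaCompact (s ∪ t) := by
  rw [union_eq_iUnion]
  exact isSigmaCompact_iUnion _ fun b => by cases b <;> assumption

lemma IsOpen.isSigmaCompact [LocallyCompactSpace X] [SecondCountableTopology X] {s : Set X}
    (hs : IsOpen s) : IsSigmaCompact s :=
  have := hs.locallyCompactSpace
  isSigmaCompact_iff_sigmaCompactSpace.mpr inferInstance

end SigmaCompact

section Hattori

variable {A : Set ℝ}

lemma nhds_le_nhds_hattori {x : ℝ} (hx : x ∈ A) : 𝓝 x ≤ @nhds ℝ (hattori A) x := by
  refine (@nhds_basis_opens ℝ (hattori A) x).ge_iff.mpr fun U ⟨hxU, hU⟩ => ?_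
  obtain ⟨ε, hε, hball, -⟩ := hU x hxU
  exact mem_of_superset (Ioo_mem_nhds (by linarith) (by linarith)) (hball hx)

lemma continuousOn_id_hattori {s : Set ℝ} (hsA : s ⊆ A) :
    @ContinuousOn ℝ ℝ _ (hattori A) id s :=
  fun _ hx => (nhds_le_nhds_hattori (hsA hx)).trans' nhdsWithin_le_nhds

lemma isOpen_of_isOpen_hattori_of_subset {U : Set ℝ} (hU : @IsOpen ℝ (hattori A) U)
    (hUA : U ⊆ A) : IsOpen U :=
  isOpen_iff_mem_nhds.mpr fun _ hx =>
    nhds_le_nhds_hattori (hUA hx) (@IsOpen.mem_nhds ℝ (hattori A) _ _ hU hx)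

end Hattori

theorem stmt12 (A : Set ℝ) (h : (@closure ℝ (hattori A) Aᶜ).Countable) :
    @SigmaCompactSpace ℝ (hattori A) := by
  set U := (@closure ℝ (hattori A) Aᶜ)ᶜ
  have hUA : U ⊆ A := compl_subset_comm.mp (@subset_closure ℝ (hattori A) _)
  have hU : IsOpen U :=
    isOpen_of_isOpen_hattori_of_subset (@isClosed_closure ℝ (hattori A) _).isOpen_compl hUA
  have hUσ : @IsSigmaCompact ℝ (hattori A) U := by
    simpa only [image_id] using @IsSigmaCompact.image_of_continuousOn ℝ ℝ _ (hattori A) id U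
      hU.isSigmaCompact (continuousOn_id_hattori hUA)
  rw [← @isSigmaCompact_univ_iff ℝ (hattori A), ← compl_union_self (@closure ℝ (hattori A) Aᶜ)]
  exact @IsSigmaCompact.union ℝ (hattori A) _ _ hUσ
    (@Set.Countable.isSigmaCompact ℝ (hattori A) _ h)
end

section
/- For a, b ∈ ℝ\A with a < b, the half-open interval [a, b) is clopen in the Hattori space (ℝ, τ_A), and [a, b) is not compact in (ℝ, τ_A). -/
open Set

lemma hattori_Ico_open (A : Set ℝ) (a c : ℝ) (ha : a ∉ A) :
    (hattori A).IsOpen (Ico a c) := by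
  intro x hx
  obtain ⟨hax, hxc⟩ := hx
  by_cases hxA : x ∈ A
  · have hxa : a < x := lt_of_le_of_ne hax (by rintro rfl; exact ha hxA)
    refine ⟨min (c - x) (x - a), lt_min (by linarith) (by linarith), fun _ y hy => ?_,
      fun h => absurd hxA h⟩
    have h1 := hy.1
    have h2 := hy.2
    have l1 := min_le_left (c - x) (x - a)
    have l2 := min_le_right (c - x) (x - a)
    exact ⟨by linarith, by linarith⟩
  · refine ⟨c - x, by linarith, fun h => absurd h hxA, fun _ y hy => ?_⟩
    exact ⟨le_trans hax hy.1, by linarith [hy.2]⟩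

theorem stmt14 (A : Set ℝ) (a b : ℝ) (ha : a ∉ A) (hb : b ∉ A) (hab : a < b) :
    @IsClopen ℝ (hattori A) (Set.Ico a b) ∧
      ¬ @IsCompact ℝ (hattori A) (Set.Ico a b) := by
  constructor
  · constructor
    · -- closed: complement open
      refine (@isOpen_compl_iff ℝ _ (hattori A)).mp ?_
      intro x hx
      simp only [mem_compl_iff, mem_Ico, not_and, not_lt] at hx
      by_cases hxa : x < a
      · refine ⟨a - x, by linarith, fun _ y hy => ?_, fun _ y hy => ?_⟩
        · simp only [mem_compl_iff, mem_Ico, not_and, not_lt]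
          intro h; linarith [hy.2]
        · simp only [mem_compl_iff, mem_Ico, not_and, not_lt]
          intro h; linarith [hy.2]
      · have hbx : b ≤ x := hx (not_lt.mp hxa)
        by_cases hxA : x ∈ A
        · have hbx' : b < x := lt_of_le_of_ne hbx (by rintro rfl; exact hb hxA)
          refine ⟨x - b, by linarith, fun _ y hy => ?_, fun h => absurd hxA h⟩
          simp only [mem_compl_iff, mem_Ico, not_and, not_lt]
          intro h; linarith [hy.1]
        · refine ⟨1, one_pos, fun h => absurd h hxA, fun _ y hy => ?_⟩
          simp only [mem_compl_iff, mem_Ico, not_and, not_lt]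
          intro h; linarith [hy.1]
    · exact hattori_Ico_open A a b ha
  · -- not compact
    intro hc
    letI := hattori A
    set U : ℕ → Set ℝ := fun n => Ico a (b - (b - a) / (n + 1)) with hU
    have hopen : ∀ n, (hattori A).IsOpen (U n) := fun n => hattori_Ico_open A _ _ ha
    have hcover : Ico a b ⊆ ⋃ n, U n := by
      intro x hx
      obtain ⟨n, hn⟩ := exists_nat_gt ((b - a) / (b - x))
      have hbx : (0:ℝ) < b - x := by linarith [hx.2]
      refine mem_iUnion.2 ⟨n, hx.1, ?_⟩
      have hn1 : (b - a) / (b - x) < n + 1 := by linarith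
      have h2 : b - a < (n + 1) * (b - x) := (div_lt_iff₀ hbx).mp hn1
      have : (b - a) / (n + 1) < b - x := by
        rw [div_lt_iff₀ (by positivity)]
        linarith [mul_comm ((n:ℝ) + 1) (b - x)]
      linarith
    obtain ⟨t, ht⟩ := hc.elim_finite_subcover U hopen hcover
    rcases t.eq_empty_or_nonempty with rfl | hne
    · simp at ht
      exact (Set.nonempty_Ico.2 hab).ne_empty ht
    · set N := t.max' hne with hN
      set x := b - (b - a) / (N + 2) with hxdef
      have hN0 : (0:ℝ) ≤ (N:ℝ) := Nat.cast_nonneg N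
      have hx1 : a ≤ x := by
        have h1 : (b - a) / (N + 2) ≤ b - a := by
          apply div_le_self (by linarith) (by linarith)
        simp only [hxdef]; linarith
      have hx2 : x < b := by
        have : (0:ℝ) < (b - a) / (N + 2) := by apply div_pos (by linarith) (by linarith)
        simp only [hxdef]; linarith
      have := ht ⟨hx1, hx2⟩
      rw [mem_iUnion₂] at this
      obtain ⟨n, hn, hmem⟩ := this
      have hnN : (n : ℝ) ≤ N := by exact_mod_cast t.le_max' n hn
      have key : (b - a) / (N + 2) ≤ (b - a) / (n + 1) := by
        apply div_le_div_of_nonneg_left (by linarith) (by linarith) (by linarith)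
      have : x < b - (b - a) / (n + 1) := hmem.2
      simp only [hxdef] at this
      linarith
end
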